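/- Let a ≥ 0, a₁, a₂ > 0, α ∈ (0,1], and let f ∈ Lip_M^{(a₁,a₂)}(α), i.e. f : [0,∞) → ℝ is bounded and continuous and |f(t) − f(x)| ≤ M·|t−x|^α/(t + a₁x² + a₂x)^{α/2} for all x, t ∈ (0,∞), where M > 0. Then for all n ∈ ℕ and all x > 0, |K_n^a(f;x) − f(x)| ≤ M·(u_{n,2}^a(x)/(a₁x² + a₂x))^{α/2}, where u_{n,2}^a(x) = K_n^a((t−x)²;x). -/

import Mathlib

open MeasureTheory Filter

noncomputable section

/-- Rising factorial `(n)_i = n(n+1)⋯(n+i-1)`, with `(n)_0 = 1`. -/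
def risingFac (n : ℕ) : ℕ → ℝ
  | 0 => 1
  | i + 1 => risingFac n i * ((n : ℝ) + i)

/-- `P_k(n,a) = Σ_{i=0}^{k} C(k,i) (n)_i a^(k-i)`. -/
def Pba (k n : ℕ) (a : ℝ) : ℝ :=
  ∑ i ∈ Finset.range (k + 1), (k.choose i : ℝ) * risingFac n i * a ^ (k - i)

/-- Generalized Baskakov basis function `W_{n,k}^a(x)`. -/
def Wgb (a : ℝ) (n k : ℕ) (x : ℝ) : ℝ :=
  Real.exp (-(a * x) / (1 + x)) * (Pba k n a / (Nat.factorial k : ℝ)) * x ^ k /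
    (1 + x) ^ (n + k)

/-- Generalized Baskakov–Kantorovich operator `K_n^a(f;x)`. -/
def Kgb (a : ℝ) (n : ℕ) (f : ℝ → ℝ) (x : ℝ) : ℝ :=
  ((n : ℝ) + 1) * ∑' k : ℕ,
    Wgb a n k x * ∫ t in ((k : ℝ) / ((n : ℝ) + 1))..(((k : ℝ) + 1) / ((n : ℝ) + 1)), f t

/-!
For fixed `n` and `x > 0`, `K_n^a(·; x)` is integration against the probability measure
`μ = ∑ₖ (n+1) W_{n,k}^a(x) · Lebesgue|(k/(n+1), (k+1)/(n+1)]`; its total mass is `1` because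
`∑ₖ P_k(n,a) yᵏ / k! = (1 - y)⁻ⁿ e^{a y}` (a Cauchy product of the binomial and exponential
series), evaluated at `y = x / (1 + x)`. Since `a₁x² + a₂x ≤ t + a₁x² + a₂x`, the Lipschitz
condition gives `|K f - f x| ≤ ∫ |f t - f x| dμ ≤ M (a₁x² + a₂x)^{-α/2} ∫ ((t - x)²)^{α/2} dμ`,
and Jensen's inequality for the concave map `s ↦ s^{α/2}` bounds the last integral by
`(∫ (t - x)² dμ)^{α/2} = u_{n,2}^a(x)^{α/2}`.
-/

open Set

lemma risingFac_eq_ascFactorial (n i : ℕ) : risingFac n i = n.ascFactorial i := by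
  induction i with
  | zero => simp [risingFac]
  | succ i ih => rw [risingFac, ih, Nat.ascFactorial_succ]; push_cast; ring

lemma Pba_nonneg (k n : ℕ) {a : ℝ} (ha : 0 ≤ a) : 0 ≤ Pba k n a := by
  unfold Pba
  simp only [risingFac_eq_ascFactorial]
  positivity

lemma hasSum_risingFac_div_factorial_mul_pow (n : ℕ) {y : ℝ} (hy : |y| < 1) :
    HasSum (fun i => risingFac n i / i.factorial * y ^ i) (1 / (1 - y) ^ n) := by
  cases n with
  | zero =>
    have hsingle := hasSum_single (f := fun i => risingFac 0 i / i.factorial * y ^ i) 0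
      fun i hi => by
        obtain ⟨i, rfl⟩ := Nat.exists_eq_succ_of_ne_zero hi
        simp [risingFac_eq_ascFactorial, Nat.zero_ascFactorial]
    simpa [risingFac] using hsingle
  | succ m =>
    have hterm : (fun i => risingFac (m + 1) i / i.factorial * y ^ i) =
        fun i => ((i + m).choose m : ℝ) * y ^ i := by
      funext i
      rw [risingFac_eq_ascFactorial, Nat.ascFactorial_eq_factorial_mul_choose, add_comm m i,
        Nat.choose_symm_add]
      push_cast
      field_simp
    rw [hterm]
    exact hasSum_choose_mul_geometric_of_norm_lt_one m (by rwa [Real.norm_eq_abs])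

lemma Pba_div_factorial (k n : ℕ) (a : ℝ) :
    Pba k n a / k.factorial =
      ∑ i ∈ Finset.range (k + 1),
        risingFac n i / i.factorial * (a ^ (k - i) / (k - i).factorial) := by
  rw [Pba, Finset.sum_div]
  refine Finset.sum_congr rfl fun i hi => ?_
  have hik : i ≤ k := Nat.lt_succ_iff.mp (Finset.mem_range.mp hi)
  rw [Nat.cast_choose ℝ hik]
  field_simp

lemma hasSum_Pba_div_factorial_mul_pow (n : ℕ) (a : ℝ) {y : ℝ} (hy : |y| < 1) :
    HasSum (fun k => Pba k n a / k.factorial * y ^ k) (1 / (1 - y) ^ n * Real.exp (a * y)) := by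
  have hexp : HasSum (fun j => (a * y) ^ j / j.factorial) (Real.exp (a * y)) := by
    rw [Real.exp_eq_exp_ℝ]
    exact NormedSpace.expSeries_div_hasSum_exp (a * y)
  have hbinom := hasSum_risingFac_div_factorial_mul_pow n hy
  have hbinom_norm : Summable fun i => ‖risingFac n i / i.factorial * y ^ i‖ := by
    refine (hasSum_risingFac_div_factorial_mul_pow n (y := |y|) (by rwa [abs_abs])).summable.congr
      fun i => ?_
    rw [Real.norm_eq_abs, abs_mul, abs_div, abs_pow, risingFac_eq_ascFactorial]
    simp
  have hexp_norm : Summable fun j => ‖(a * y) ^ j / j.factorial‖ := by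
    simpa [abs_div, abs_pow] using Real.summable_pow_div_factorial |a * y|
  have hcauchy := hasSum_sum_range_mul_of_summable_norm hbinom_norm hexp_norm
  rw [hbinom.tsum_eq, hexp.tsum_eq] at hcauchy
  convert hcauchy using 1
  · rfl
  funext k
  rw [Pba_div_factorial, Finset.sum_mul]
  refine Finset.sum_congr rfl fun i hi => ?_
  rw [mul_pow, ← pow_sub_mul_pow y (Nat.lt_succ_iff.mp (Finset.mem_range.mp hi))]
  ring

lemma summable_mul_pow_mul_pow_of_summable {c : ℕ → ℝ} (hc : ∀ k, 0 ≤ c k) {r y : ℝ}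
    (hy : 0 ≤ y) (hyr : y < r) (hsum : Summable fun k => c k * r ^ k) (m : ℕ) :
    Summable fun k => c k * y ^ k * (k : ℝ) ^ m := by
  have hr : 0 < r := hy.trans_lt hyr
  have hq : ‖y / r‖ < 1 := by
    rwa [Real.norm_eq_abs, abs_of_nonneg (by positivity), div_lt_one hr]
  have hbound : ∀ k, c k * r ^ k ≤ ∑' j, c j * r ^ j := fun k =>
    hsum.le_tsum k fun j _ => mul_nonneg (hc j) (pow_nonneg hr.le j)
  refine Summable.of_nonneg_of_le (fun k => by have := hc k; positivity) (fun k => ?_)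
    ((summable_pow_mul_geometric_of_norm_lt_one m hq).mul_left (∑' j, c j * r ^ j))
  calc c k * y ^ k * (k : ℝ) ^ m = c k * r ^ k * ((k : ℝ) ^ m * (y / r) ^ k) := by
        rw [div_pow]; field_simp
    _ ≤ (∑' j, c j * r ^ j) * ((k : ℝ) ^ m * (y / r) ^ k) := by gcongr; exact hbound k

lemma Wgb_eq_mul (a : ℝ) (n k : ℕ) {x : ℝ} (hx : 0 ≤ x) :
    Wgb a n k x = Real.exp (-(a * x) / (1 + x)) / (1 + x) ^ n *
      (Pba k n a / k.factorial * (x / (1 + x)) ^ k) := by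
  have : (0 : ℝ) < 1 + x := by linarith
  rw [Wgb, pow_add, div_pow]
  field_simp

lemma Wgb_nonneg {a : ℝ} (ha : 0 ≤ a) (n k : ℕ) {x : ℝ} (hx : 0 ≤ x) : 0 ≤ Wgb a n k x := by
  have := Pba_nonneg k n ha
  unfold Wgb
  positivity

lemma abs_div_one_add_lt_one {x : ℝ} (hx : 0 ≤ x) : |x / (1 + x)| < 1 := by
  rw [abs_of_nonneg (by positivity), div_lt_one (by positivity)]
  linarith

lemma hasSum_Wgb (a : ℝ) (n : ℕ) {x : ℝ} (hx : 0 ≤ x) : HasSum (fun k => Wgb a n k x) 1 := by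
  have hx1 : (1 : ℝ) + x ≠ 0 := by positivity
  have h := (hasSum_Pba_div_factorial_mul_pow n a (abs_div_one_add_lt_one hx)).mul_left
    (Real.exp (-(a * x) / (1 + x)) / (1 + x) ^ n)
  simp only [← Wgb_eq_mul a n _ hx] at h
  have hval : Real.exp (-(a * x) / (1 + x)) / (1 + x) ^ n *
      (1 / (1 - x / (1 + x)) ^ n * Real.exp (a * (x / (1 + x)))) = 1 := by
    rw [one_sub_div hx1, add_sub_cancel_right, div_pow, one_pow, one_div_one_div,
      ← mul_assoc, div_mul_cancel₀ _ (pow_ne_zero n hx1), ← Real.exp_add, neg_div,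
      mul_div_assoc, neg_add_cancel, Real.exp_zero]
  rwa [hval] at h

lemma summable_Wgb_mul_sq {a : ℝ} (ha : 0 ≤ a) (n : ℕ) {x : ℝ} (hx : 0 ≤ x) :
    Summable fun k => Wgb a n k x * ((k : ℝ) + 1) ^ 2 := by
  set y := x / (1 + x)
  have hy : 0 ≤ y := by positivity
  have hy1 : y < 1 := (abs_lt.mp (abs_div_one_add_lt_one hx)).2
  have hc : ∀ k, 0 ≤ Pba k n a / k.factorial := fun k => by have := Pba_nonneg k n ha; positivity
  have hr : |(1 + y) / 2| < 1 := by rw [abs_lt]; constructor <;> linarith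
  have hsq := (summable_mul_pow_mul_pow_of_summable hc hy (by linarith : y < (1 + y) / 2)
    (hasSum_Pba_div_factorial_mul_pow n a hr).summable 2).mul_left
    (Real.exp (-(a * x) / (1 + x)) / (1 + x) ^ n)
  refine Summable.of_nonneg_of_le (fun k => by have := Wgb_nonneg ha n k hx; positivity)
    (fun k => ?_) ((hsq.mul_left 2).add ((hasSum_Wgb a n hx).summable.mul_left 2))
  have hk : ((k : ℝ) + 1) ^ 2 ≤ 2 * (k : ℝ) ^ 2 + 2 := by nlinarith [sq_nonneg ((k : ℝ) - 1)]
  calc Wgb a n k x * ((k : ℝ) + 1) ^ 2 ≤ Wgb a n k x * (2 * (k : ℝ) ^ 2 + 2) := by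
        gcongr; exact Wgb_nonneg ha n k hx
    _ = _ := by rw [Wgb_eq_mul a n k hx]; ring

def kantorovichMeasure (c : ℝ) (w : ℕ → ℝ) : Measure ℝ :=
  Measure.sum fun k : ℕ =>
    ENNReal.ofReal (c * w k) • volume.restrict (Ioc ((k : ℝ) / c) (((k : ℝ) + 1) / c))

section kantorovichMeasure

variable {c : ℝ} {w : ℕ → ℝ}

lemma volume_Ioc_div (k : ℕ) :
    volume (Ioc ((k : ℝ) / c) (((k : ℝ) + 1) / c)) = ENNReal.ofReal (1 / c) := by
  rw [Real.volume_Ioc]; congr 1; ring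

lemma isProbabilityMeasure_kantorovichMeasure (hc : 0 < c) (hw0 : ∀ k, 0 ≤ w k)
    (hw : HasSum w 1) : IsProbabilityMeasure (kantorovichMeasure c w) := by
  constructor
  have hterm : ∀ k, ENNReal.ofReal (c * w k) * ENNReal.ofReal (1 / c) = ENNReal.ofReal (w k) :=
    fun k => by rw [← ENNReal.ofReal_mul (by have := hw0 k; positivity)]; field_simp
  simp only [kantorovichMeasure, Measure.sum_apply_of_countable, Measure.smul_apply,
    Measure.restrict_apply_univ, volume_Ioc_div, smul_eq_mul, hterm]
  rw [← ENNReal.ofReal_tsum_of_nonneg hw0 hw.summable, hw.tsum_eq, ENNReal.ofReal_one]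

lemma ae_pos_kantorovichMeasure (hc : 0 < c) : ∀ᵐ t ∂kantorovichMeasure c w, 0 < t := by
  refine Measure.ae_sum_iff' measurableSet_Ioi |>.mpr fun k => ?_
  refine Measure.ae_smul_measure ?_ _
  filter_upwards [ae_restrict_mem measurableSet_Ioc] with t ht
  exact lt_of_le_of_lt (by positivity) ht.1

lemma integrable_kantorovichMeasure (hc : 0 < c) (hw0 : ∀ k, 0 ≤ w k)
    (hw2 : Summable fun k => w k * ((k : ℝ) + 1) ^ 2) {g : ℝ → ℝ} {C : ℝ}
    (hg : ContinuousOn g (Ici 0)) (hgC : ∀ t, 0 ≤ t → |g t| ≤ C * (1 + t) ^ 2) :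
    Integrable g (kantorovichMeasure c w) := by
  have hI : ∀ k : ℕ, IntegrableOn g (Ioc ((k : ℝ) / c) (((k : ℝ) + 1) / c)) := fun k =>
    ((hg.mono fun t ht => le_trans (by positivity) ht.1).integrableOn_Icc).mono_set
      Ioc_subset_Icc_self
  refine integrable_sum_measure (fun k => (hI k).smul_measure ENNReal.ofReal_ne_top) ?_
  refine Summable.of_nonneg_of_le (fun k => integral_nonneg fun t => norm_nonneg _) (fun k => ?_)
    (hw2.mul_right (C * (1 + 1 / c) ^ 2))
  have hC : 0 ≤ C := (abs_nonneg _).trans ((hgC 0 le_rfl).trans (by simp))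
  have hbound : ∀ t ∈ Ioc ((k : ℝ) / c) (((k : ℝ) + 1) / c),
      ‖‖g t‖‖ ≤ C * (((k : ℝ) + 1) * (1 + 1 / c)) ^ 2 := by
    intro t ht
    have ht0 : 0 ≤ t := le_trans (by positivity) ht.1.le
    have htk : 1 + t ≤ ((k : ℝ) + 1) * (1 + 1 / c) := by
      have := ht.2
      rw [div_eq_mul_one_div] at this
      nlinarith [(by positivity : (0 : ℝ) ≤ (k : ℝ)), (by positivity : (0 : ℝ) < 1 / c)]
    rw [norm_norm, Real.norm_eq_abs]
    calc |g t| ≤ C * (1 + t) ^ 2 := hgC t ht0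
      _ ≤ C * (((k : ℝ) + 1) * (1 + 1 / c)) ^ 2 := by gcongr
  have hint := norm_setIntegral_le_of_norm_le_const
    (by rw [volume_Ioc_div]; exact ENNReal.ofReal_lt_top) hbound
  rw [measureReal_def, volume_Ioc_div, ENNReal.toReal_ofReal (by positivity)] at hint
  rw [integral_smul_measure, ENNReal.toReal_ofReal (mul_nonneg hc.le (hw0 k)), smul_eq_mul]
  calc c * w k * ∫ t in Ioc ((k : ℝ) / c) (((k : ℝ) + 1) / c), ‖g t‖
      ≤ c * w k * (C * (((k : ℝ) + 1) * (1 + 1 / c)) ^ 2 * (1 / c)) := by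
        gcongr
        · exact mul_nonneg hc.le (hw0 k)
        · exact (le_abs_self _).trans hint
    _ = w k * ((k : ℝ) + 1) ^ 2 * (C * (1 + 1 / c) ^ 2) := by field_simp

lemma integral_kantorovichMeasure (hc : 0 < c) (hw0 : ∀ k, 0 ≤ w k) {g : ℝ → ℝ}
    (hg : Integrable g (kantorovichMeasure c w)) :
    ∫ t, g t ∂kantorovichMeasure c w =
      c * ∑' k : ℕ, w k * ∫ t in ((k : ℝ) / c)..(((k : ℝ) + 1) / c), g t := by
  rw [kantorovichMeasure, integral_sum_measure hg, ← tsum_mul_left]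
  refine tsum_congr fun k => ?_
  rw [integral_smul_measure, ENNReal.toReal_ofReal (mul_nonneg hc.le (hw0 k)), smul_eq_mul,
    intervalIntegral.integral_of_le (by gcongr; linarith), mul_assoc]

end kantorovichMeasure

lemma rpow_le_one_add_self {u p : ℝ} (hu : 0 ≤ u) (hp0 : 0 ≤ p) (hp1 : p ≤ 1) :
    u ^ p ≤ 1 + u := by
  rcases le_total u 1 with h | h
  · linarith [Real.rpow_le_one hu h hp0]
  · linarith [Real.rpow_le_self_of_one_le h hp1]

section Jensen

variable {Ω : Type*} [MeasurableSpace Ω] {μ : Measure Ω}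

lemma MeasureTheory.Integrable.rpow_of_nonneg [IsFiniteMeasure μ] {g : Ω → ℝ} {p : ℝ}
    (hp0 : 0 ≤ p) (hp1 : p ≤ 1) (hg0 : ∀ᵐ ω ∂μ, 0 ≤ g ω) (hg : Integrable g μ) :
    Integrable (fun ω => g ω ^ p) μ := by
  refine ((integrable_const 1).add hg).mono'
    ((Real.continuous_rpow_const hp0).comp_aestronglyMeasurable hg.1) ?_
  filter_upwards [hg0] with ω hω
  rw [Real.norm_eq_abs, abs_of_nonneg (Real.rpow_nonneg hω p)]
  exact rpow_le_one_add_self hω hp0 hp1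

lemma integral_rpow_le_rpow_integral [IsProbabilityMeasure μ] {g : Ω → ℝ} {p : ℝ}
    (hp0 : 0 ≤ p) (hp1 : p ≤ 1) (hg0 : ∀ᵐ ω ∂μ, 0 ≤ g ω) (hg : Integrable g μ) :
    ∫ ω, g ω ^ p ∂μ ≤ (∫ ω, g ω ∂μ) ^ p :=
  (Real.concaveOn_rpow hp0 hp1).le_map_integral (Real.continuous_rpow_const hp0).continuousOn
    isClosed_Ici hg0 hg (hg.rpow_of_nonneg hp0 hp1 hg0)

end Jensen

lemma abs_sub_rpow_eq_sq_rpow (t x α : ℝ) : |t - x| ^ α = ((t - x) ^ 2) ^ (α / 2) := by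
  rw [← sq_abs, ← Real.rpow_natCast, ← Real.rpow_mul (abs_nonneg _)]
  congr 1
  push_cast
  ring

lemma abs_integral_sub_le_of_ae_abs_sub_le {μ : Measure ℝ} [IsProbabilityMeasure μ]
    {f : ℝ → ℝ} {x K α : ℝ} (hK : 0 ≤ K) (hα0 : 0 ≤ α) (hα2 : α ≤ 2) (hf : Integrable f μ)
    (hsq : Integrable (fun t => (t - x) ^ 2) μ)
    (hfx : ∀ᵐ t ∂μ, |f t - f x| ≤ K * |t - x| ^ α) :
    |∫ t, f t ∂μ - f x| ≤ K * (∫ t, (t - x) ^ 2 ∂μ) ^ (α / 2) := by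
  have hsq0 : ∀ᵐ t ∂μ, 0 ≤ (t - x) ^ 2 := ae_of_all _ fun t => sq_nonneg _
  have hpow : Integrable (fun t => |t - x| ^ α) μ := by
    simpa only [abs_sub_rpow_eq_sq_rpow] using
      hsq.rpow_of_nonneg (by linarith) (by linarith) hsq0
  calc |∫ t, f t ∂μ - f x| = |∫ t, (f t - f x) ∂μ| := by
        rw [integral_sub hf (integrable_const _), integral_const, probReal_univ, one_smul]
    _ ≤ ∫ t, |f t - f x| ∂μ := abs_integral_le_integral_abs
    _ ≤ ∫ t, K * |t - x| ^ α ∂μ :=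
        integral_mono_ae (hf.sub (integrable_const _)).abs (hpow.const_mul K) hfx
    _ = K * ∫ t, ((t - x) ^ 2) ^ (α / 2) ∂μ := by
        simp only [integral_const_mul, abs_sub_rpow_eq_sq_rpow]
    _ ≤ K * (∫ t, (t - x) ^ 2 ∂μ) ^ (α / 2) := by
        gcongr
        exact integral_rpow_le_rpow_integral (by linarith) (by linarith) hsq0 hsq

lemma Kgb_eq_integral {a : ℝ} (ha : 0 ≤ a) (n : ℕ) {x : ℝ} (hx : 0 ≤ x) {g : ℝ → ℝ}
    (hg : Integrable g (kantorovichMeasure ((n : ℝ) + 1) fun k => Wgb a n k x)) :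
    Kgb a n g x = ∫ t, g t ∂kantorovichMeasure ((n : ℝ) + 1) fun k => Wgb a n k x := by
  rw [integral_kantorovichMeasure (by positivity) (fun k => Wgb_nonneg ha n k hx) hg, Kgb]

/-- approximation in the Lipschitz-type space `Lip_M^{(a₁,a₂)}(α)`. -/
theorem statement1 (a M a₁ a₂ α : ℝ) (ha : 0 ≤ a) (hM : 0 < M) (ha₁ : 0 < a₁)
    (ha₂ : 0 < a₂) (hα : 0 < α) (hα1 : α ≤ 1) (f : ℝ → ℝ)
    (hbdd : ∃ B : ℝ, ∀ x : ℝ, 0 ≤ x → |f x| ≤ B)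
    (hcont : ContinuousOn f (Set.Ici 0))
    (hLip : ∀ x t : ℝ, 0 < x → 0 < t →
      |f t - f x| ≤ M * |t - x| ^ α / (t + a₁ * x ^ 2 + a₂ * x) ^ (α / 2)) :
    ∀ (n : ℕ) (x : ℝ), 0 < x →
      |Kgb a n f x - f x| ≤
        M * ((Kgb a n (fun t => (t - x) ^ 2) x) / (a₁ * x ^ 2 + a₂ * x)) ^ (α / 2) := by
  obtain ⟨B, hB⟩ := hbdd
  intro n x hx
  set μ := kantorovichMeasure ((n : ℝ) + 1) fun k => Wgb a n k x
  have hc : (0 : ℝ) < n + 1 := by positivity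
  have hw0 := fun k => Wgb_nonneg ha n k hx.le
  have hw2 := summable_Wgb_mul_sq ha n hx.le
  have := isProbabilityMeasure_kantorovichMeasure hc hw0 (hasSum_Wgb a n hx.le)
  have hf : Integrable f μ := integrable_kantorovichMeasure hc hw0 hw2 hcont fun t ht =>
    (hB t ht).trans (le_mul_of_one_le_right ((abs_nonneg _).trans (hB 0 le_rfl))
      (one_le_pow₀ (by linarith)))
  have hsq : Integrable (fun t => (t - x) ^ 2) μ :=
    integrable_kantorovichMeasure hc hw0 hw2 (C := (1 + x) ^ 2) (by fun_prop) fun t ht => by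
      rw [abs_of_nonneg (sq_nonneg _), ← mul_pow]
      exact sq_le_sq' (by nlinarith) (by nlinarith)
  set A := a₁ * x ^ 2 + a₂ * x
  have hA : 0 < A := by positivity
  have hfx : ∀ᵐ t ∂μ, |f t - f x| ≤ M / A ^ (α / 2) * |t - x| ^ α := by
    filter_upwards [ae_pos_kantorovichMeasure hc] with t ht
    calc |f t - f x| ≤ M * |t - x| ^ α / (t + A) ^ (α / 2) := by
          simpa only [A, add_assoc] using hLip x t hx ht
      _ ≤ M * |t - x| ^ α / A ^ (α / 2) := by gcongr; linarith
      _ = M / A ^ (α / 2) * |t - x| ^ α := by ring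
  rw [Kgb_eq_integral ha n hx.le hf, Kgb_eq_integral ha n hx.le hsq,
    Real.div_rpow (integral_nonneg fun t => sq_nonneg _) hA.le]
  calc _ ≤ M / A ^ (α / 2) * (∫ t, (t - x) ^ 2 ∂μ) ^ (α / 2) :=
        abs_integral_sub_le_of_ae_abs_sub_le (by positivity) hα.le (by linarith) hf hsq hfx
    _ = _ := by ring
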